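/- arXiv:math/0107148 — 5 statements merged into one kernel-verified Lean document; each statement's English description precedes it below -/
import Mathlib

section
/- Let V and W be finite dimensional G-graded vector spaces over a field k. If the G-graded algebras END(V) and END(W) are isomorphic, then there exists σ ∈ G such that W ≅ V(σ) as graded vector spaces. -/
/-- The `σ`-component of the graded endomorphism algebra `END(V)` of a
`G`-graded vector space `V = ⊕ 𝒱 g`:
`END(V)_σ = {f ∈ End(V) | f(V_g) ⊆ V_{σg} for all g}`. -/
def ENDdeg {k : Type*} [Field k] {G : Type*} [Group G]
    {V : Type*} [AddCommGroup V] [Module k V]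
    (𝒱 : G → Submodule k V) (σ : G) : Submodule k (Module.End k V) where
  carrier := {f | ∀ g : G, ∀ v ∈ 𝒱 g, f v ∈ 𝒱 (σ * g)}
  add_mem' := by
    intro a b ha hb g v hv
    simpa using (𝒱 (σ * g)).add_mem (ha g v hv) (hb g v hv)
  zero_mem' := by intro g v hv; simp
  smul_mem' := by
    intro c f hf g v hv
    simpa using (𝒱 (σ * g)).smul_mem c (hf g v hv)

/-! Every algebra isomorphism `End V ≃ End W` is conjugation by a linear isomorphism `u : V ≃ W`
(`AlgEquiv.eq_linearEquivConjAlgEquiv`), so transporting the grading of `V` along `u` leaves two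
gradings of `W` with the same pieces `END(W)_σ`. The projections onto the components of one grading
lie in `END_1` of the other, which produces a nonzero `x` homogeneous for both, of degrees `g₀` and
`h₀`. For `y` homogeneous of degree `g`, a rank-one map sending `x` to `y` lies in `END_{g g₀⁻¹}`,
so `y` has degree `g g₀⁻¹ h₀` in the other grading. -/

namespace DirectSum

variable {ι R M : Type*} [DecidableEq ι] [Semiring R] [AddCommMonoid M] [Module R M]

def decomposeComponent (ℳ : ι → Submodule R M) [Decomposition ℳ] (i : ι) : M →ₗ[R] ℳ i :=
  component R ι (fun j ↦ ℳ j) i ∘ₗ (decomposeLinearEquiv ℳ).toLinearMap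

@[simp]
theorem decomposeComponent_apply (ℳ : ι → Submodule R M) [Decomposition ℳ] (i : ι) (m : M) :
    decomposeComponent ℳ i m = decompose ℳ m i := rfl

theorem exists_decompose_ne_zero (ℳ : ι → Submodule R M) [Decomposition ℳ] {m : M} (hm : m ≠ 0) :
    ∃ i, (decompose ℳ m i : M) ≠ 0 := by
  classical
  by_contra! h
  exact hm (by simpa [h] using (sum_support_decompose ℳ m).symm)

end DirectSum

theorem DirectSum.IsInternal.submodule_map {ι R M N : Type*} [DecidableEq ι] [Ring R]
    [AddCommGroup M] [Module R M] [AddCommGroup N] [Module R N] {A : ι → Submodule R M}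
    (hA : IsInternal A) (u : M ≃ₗ[R] N) : IsInternal fun i ↦ (A i).map (u : M →ₗ[R] N) := by
  rw [isInternal_submodule_iff_iSupIndep_and_iSup_eq_top] at hA ⊢
  refine ⟨(iSupIndep_map_orderIso_iff (Submodule.orderIsoMapComap u)).mpr hA.1, ?_⟩
  rw [← Submodule.map_iSup, hA.2, Submodule.map_top, LinearMap.range_eq_top]
  exact u.surjective

open DirectSum

namespace ENDdeg

variable {k : Type*} [Field k] {G : Type*} [Group G] [DecidableEq G]
  {V : Type*} [AddCommGroup V] [Module k V]

theorem subtype_comp_decomposeComponent_mem_one (𝒱 : G → Submodule k V) [Decomposition 𝒱]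
    (i : G) : (𝒱 i).subtype ∘ₗ decomposeComponent 𝒱 i ∈ ENDdeg 𝒱 1 := by
  intro g v hv
  rw [one_mul]
  by_cases hgi : g = i
  · subst hgi
    simpa [decompose_of_mem_same 𝒱 hv] using hv
  · simp [decompose_of_mem_ne 𝒱 hv hgi]

theorem isHomogeneous_of_one_le {𝒱 𝒱' : G → Submodule k V} [Decomposition 𝒱']
    (h : ENDdeg 𝒱' 1 ≤ ENDdeg 𝒱 1) (g : G) : SetLike.IsHomogeneous 𝒱' (𝒱 g) := by
  intro i v hv
  simpa using h (subtype_comp_decomposeComponent_mem_one 𝒱' i) g v hv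

theorem exists_ne_zero_mem_mem {𝒱 𝒱' : G → Submodule k V} [Nontrivial V] [Decomposition 𝒱]
    [Decomposition 𝒱'] (h : ENDdeg 𝒱' 1 ≤ ENDdeg 𝒱 1) :
    ∃ x ≠ 0, ∃ i j, x ∈ 𝒱 i ∧ x ∈ 𝒱' j := by
  obtain ⟨v, hv⟩ := exists_ne (0 : V)
  obtain ⟨g, hg⟩ := exists_decompose_ne_zero 𝒱 hv
  obtain ⟨h', hh'⟩ := exists_decompose_ne_zero 𝒱' hg
  exact ⟨_, hh', g, h', isHomogeneous_of_one_le h g h' (Submodule.coe_mem _), Submodule.coe_mem _⟩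

theorem exists_mem_apply_eq (𝒱 : G → Submodule k V) [Decomposition 𝒱] {x y : V} {g₀ g₁ : G}
    (hx : x ≠ 0) (hx𝒱 : x ∈ 𝒱 g₀) (hy : y ∈ 𝒱 g₁) :
    ∃ f ∈ ENDdeg 𝒱 (g₁ * g₀⁻¹), f x = y := by
  obtain ⟨μ, hμ⟩ := Module.Projective.exists_dual_eq_one k (x := (⟨x, hx𝒱⟩ : 𝒱 g₀))
    (by simpa using hx)
  have hdec : decompose 𝒱 x g₀ = ⟨x, hx𝒱⟩ := Subtype.ext (decompose_of_mem_same 𝒱 hx𝒱)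
  refine ⟨(μ ∘ₗ decomposeComponent 𝒱 g₀).smulRight y, fun g v hv ↦ ?_, by simp [hdec, hμ]⟩
  by_cases hg : g = g₀
  · subst hg
    simpa using (𝒱 g₁).smul_mem _ hy
  · have : decompose 𝒱 v g₀ = 0 := Subtype.ext (decompose_of_mem_ne 𝒱 hv hg)
    simp [this]

theorem le_mul_right_of_le {𝒱 𝒱' : G → Submodule k V} [Decomposition 𝒱]
    (h : ∀ σ, ENDdeg 𝒱 σ ≤ ENDdeg 𝒱' σ) {x : V} {g₀ h₀ : G} (hx : x ≠ 0) (hx𝒱 : x ∈ 𝒱 g₀)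
    (hx𝒱' : x ∈ 𝒱' h₀) (g : G) : 𝒱 g ≤ 𝒱' (g * (g₀⁻¹ * h₀)) := by
  intro y hy
  obtain ⟨f, hf, rfl⟩ := exists_mem_apply_eq 𝒱 hx hx𝒱 hy
  simpa [mul_assoc] using h _ hf h₀ x hx𝒱'

theorem exists_eq_mul_right_of_eq {𝒱 𝒱' : G → Submodule k V} [Decomposition 𝒱]
    [Decomposition 𝒱'] (h : ∀ σ, ENDdeg 𝒱 σ = ENDdeg 𝒱' σ) :
    ∃ σ, ∀ g, 𝒱' g = 𝒱 (g * σ) := by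
  cases subsingleton_or_nontrivial V
  · exact ⟨1, fun _ ↦ Subsingleton.elim _ _⟩
  obtain ⟨x, hx, g₀, h₀, hx𝒱, hx𝒱'⟩ := exists_ne_zero_mem_mem (h 1).ge
  refine ⟨h₀⁻¹ * g₀, fun g ↦ le_antisymm ?_ ?_⟩
  · exact le_mul_right_of_le (fun σ ↦ (h σ).ge) hx hx𝒱' hx𝒱 g
  · simpa [mul_assoc] using le_mul_right_of_le (fun σ ↦ (h σ).le) hx hx𝒱 hx𝒱' (g * (h₀⁻¹ * g₀))

end ENDdeg

theorem ENDdeg.map_conjAlgEquiv {k : Type*} [Field k] {G : Type*} [Group G]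
    {V W : Type*} [AddCommGroup V] [Module k V] [AddCommGroup W] [Module k W]
    (𝒱 : G → Submodule k V) (u : V ≃ₗ[k] W) (σ : G) :
    (ENDdeg 𝒱 σ).map (u.conjAlgEquiv k).toLinearMap =
      ENDdeg (fun g ↦ (𝒱 g).map (u : V →ₗ[k] W)) σ := by
  ext f
  constructor
  · rintro ⟨f', hf', rfl⟩ g _ ⟨v, hv, rfl⟩
    exact ⟨f' v, hf' g v hv, by simp⟩
  · intro hf
    refine ⟨(u.symm : W →ₗ[k] V) ∘ₗ f ∘ₗ (u : V →ₗ[k] W), fun g v hv ↦ ?_, by ext; simp⟩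
    obtain ⟨v', hv', hv'v⟩ := hf g (u v) ⟨v, hv, rfl⟩
    simpa [← hv'v] using hv'

theorem exists_suspension_of_END_iso_general {k : Type*} [Field k] {G : Type*} [Group G] [DecidableEq G]
    {V W : Type*} [AddCommGroup V] [Module k V]
    [AddCommGroup W] [Module k W]
    (𝒱 : G → Submodule k V) (hV : DirectSum.IsInternal 𝒱)
    (𝒲 : G → Submodule k W) (hW : DirectSum.IsInternal 𝒲)
    (e : Module.End k V ≃ₐ[k] Module.End k W)
    (he : ∀ g : G, Submodule.map e.toLinearMap (ENDdeg 𝒱 g) = ENDdeg 𝒲 g) :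
    ∃ (σ : G) (φ : W ≃ₗ[k] V),
      ∀ g : G, Submodule.map (φ : W →ₗ[k] V) (𝒲 g) = 𝒱 (g * σ) := by
  obtain ⟨u, rfl⟩ := e.eq_linearEquivConjAlgEquiv
  let _ := (hV.submodule_map u).chooseDecomposition
  let _ := hW.chooseDecomposition
  obtain ⟨σ, hσ⟩ := ENDdeg.exists_eq_mul_right_of_eq fun g ↦
    (ENDdeg.map_conjAlgEquiv 𝒱 u g).symm.trans (he g)
  exact ⟨σ, u.symm, fun g ↦ by rw [hσ, Submodule.map_symm_eq_iff]⟩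

/-- If `END(V)` and `END(W)` are isomorphic as `G`-graded algebras
(for finite dimensional `G`-graded vector spaces `V`, `W`), then there exists
`σ ∈ G` with `W ≅ V(σ)` as graded vector spaces (where `V(σ)_g = V_{gσ}`). -/
theorem exists_suspension_of_END_iso {k : Type*} [Field k] {G : Type*} [Group G] [DecidableEq G]
    {V W : Type*} [AddCommGroup V] [Module k V] [FiniteDimensional k V]
    [AddCommGroup W] [Module k W] [FiniteDimensional k W]
    (𝒱 : G → Submodule k V) (hV : DirectSum.IsInternal 𝒱)
    (𝒲 : G → Submodule k W) (hW : DirectSum.IsInternal 𝒲)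
    (e : Module.End k V ≃ₐ[k] Module.End k W)
    (he : ∀ g : G, Submodule.map e.toLinearMap (ENDdeg 𝒱 g) = ENDdeg 𝒲 g) :
    ∃ (σ : G) (φ : W ≃ₗ[k] V),
      ∀ g : G, Submodule.map (φ : W →ₗ[k] V) (𝒲 g) = 𝒱 (g * σ) :=
  exists_suspension_of_END_iso_general 𝒱 hV 𝒲 hW e he
end

section
/- Let V and W be G-graded vector spaces of dimension m associated to m-tuples (g_1,…,g_m) and (h_1,…,h_m) of degrees of homogeneous bases. Then END(V) ≅ END(W) as G-graded algebras if and only if there exist σ ∈ G and a permutation π of {1,…,m} such that h_i = g_{π(i)} σ for all i. -/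
/-!
An algebra isomorphism `End V ≃ End W` is conjugation by a linear isomorphism `φ : V ≃ W`. If it
respects the gradings, it sends the matrix unit `E_jj` (here `(b.coord j).smulRight (b j)`) to a
degree-`1` projection onto the line through `φ (b j)`, so `φ (b j)` is homogeneous, of degree `y`
say; then `φ (b i) = φ E_ij φ⁻¹ (φ (b j))` is homogeneous of degree `g i (g j)⁻¹ y`. Thus `φ`
carries `b` to a homogeneous basis of `W` with degrees `g i σ`, `σ = (g j)⁻¹ y`, and comparing the
dimensions of the homogeneous components of `W` gives the permutation. Conversely, a linear
isomorphism shifting all degrees by `σ` on the right conjugates `END(V)_τ` onto `END(W)_τ`.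
-/
open Module

section

variable {k G V W ι : Type*} [Field k] [AddCommGroup V] [Module k V] [AddCommGroup W] [Module k W]
  {𝒱 : G → Submodule k V} {𝒲 : G → Submodule k W} {g : ι → G}

theorem iSupIndep.span_basis_fiber_eq (h𝒱 : iSupIndep 𝒱) (b : Basis ι k V)
    (hb : ∀ i, b i ∈ 𝒱 (g i)) (x : G) :
    Submodule.span k (Set.range fun i : {i // g i = x} => b i) = 𝒱 x := by
  have hle : (fun x => Submodule.span k (Set.range fun i : {i // g i = x} => b i)) ≤ 𝒱 :=
    fun x => Submodule.span_le.mpr (by rintro _ ⟨⟨i, rfl⟩, rfl⟩; exact hb i)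
  have htop : ⨆ x, Submodule.span k (Set.range fun i : {i // g i = x} => b i) = ⊤ := by
    rw [Submodule.iSup_span, eq_top_iff, ← b.span_eq]
    refine Submodule.span_mono ?_
    rintro _ ⟨i, rfl⟩
    exact Set.mem_iUnion.mpr ⟨g i, ⟨i, rfl⟩, rfl⟩
  exact congrFun ((h𝒱.le_iff_eq_of_iSup_eq_top htop).mp hle) x

noncomputable def iSupIndep.fiberBasis (h𝒱 : iSupIndep 𝒱) (b : Basis ι k V)
    (hb : ∀ i, b i ∈ 𝒱 (g i)) (x : G) : Basis {i // g i = x} k (𝒱 x) :=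
  (Basis.span (b.linearIndependent.comp _ Subtype.val_injective)).map
    (LinearEquiv.ofEq _ _ (h𝒱.span_basis_fiber_eq b hb x))

theorem iSupIndep.exists_perm_of_homogeneous_bases (h𝒱 : iSupIndep 𝒱) {b c : Basis ι k V}
    {h : ι → G} (hb : ∀ i, b i ∈ 𝒱 (g i)) (hc : ∀ i, c i ∈ 𝒱 (h i)) :
    ∃ π : Equiv.Perm ι, ∀ i, h i = g (π i) := by
  have e : ∀ x, {i // h i = x} ≃ {i // g i = x} := fun x =>
    (Cardinal.eq.mp (mk_eq_mk_of_basis' (h𝒱.fiberBasis c hc x) (h𝒱.fiberBasis b hb x))).some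
  exact ⟨Equiv.ofFiberEquiv e, fun i => (Equiv.ofFiberEquiv_map e i).symm⟩

theorem iSupIndep.basis_coord_eq_zero_of_ne (h𝒱 : iSupIndep 𝒱) {b : Basis ι k V}
    (hb : ∀ i, b i ∈ 𝒱 (g i)) {x : G} {v : V} (hv : v ∈ 𝒱 x) {j : ι} (hj : g j ≠ x) :
    b.coord j v = 0 := by
  rw [← h𝒱.span_basis_fiber_eq b hb x] at hv
  refine (Submodule.span_le (p := LinearMap.ker (b.coord j))).mpr ?_ hv
  rintro _ ⟨⟨i, rfl⟩, rfl⟩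
  simp [Finsupp.single_eq_of_ne (ne_of_apply_ne g hj)]

variable [Group G]

theorem iSupIndep.smulRight_coord_mem_ENDdeg (h𝒱 : iSupIndep 𝒱) {b : Basis ι k V}
    (hb : ∀ i, b i ∈ 𝒱 (g i)) (i j : ι) :
    (b.coord j).smulRight (b i) ∈ ENDdeg 𝒱 (g i * (g j)⁻¹) := by
  intro x v hv
  by_cases hj : g j = x
  · subst hj
    simpa using Submodule.smul_mem _ (b.coord j v) (hb i)
  · simp [h𝒱.basis_coord_eq_zero_of_ne hb hv hj]

theorem exists_mem_of_range_le_span_singleton (h𝒲 : ⨆ y, 𝒲 y = ⊤) {q : Module.End k W}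
    (hq : q ∈ ENDdeg 𝒲 1) (hq0 : q ≠ 0) {w : W} (hrange : LinearMap.range q ≤ k ∙ w) :
    ∃ y, w ∈ 𝒲 y := by
  by_contra! hw
  have hker : ∀ y, 𝒲 y ≤ LinearMap.ker q := by
    intro y u hu
    obtain ⟨a, ha⟩ := Submodule.mem_span_singleton.mp (hrange ⟨u, rfl⟩)
    have hqu : a • w ∈ 𝒲 y := by simpa [ha] using hq y u hu
    rcases eq_or_ne a 0 with rfl | ha0
    · simpa using ha.symm
    · exact absurd ((Submodule.smul_mem_iff _ ha0).mp hqu) (hw y)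
  apply hq0
  rw [← LinearMap.ker_eq_top, eq_top_iff, ← h𝒲]
  exact iSup_le hker

theorem exists_shift_of_conjAlgEquiv_mem_ENDdeg [Nonempty ι] (h𝒱 : iSupIndep 𝒱)
    (h𝒲 : ⨆ y, 𝒲 y = ⊤) {b : Basis ι k V} (hb : ∀ i, b i ∈ 𝒱 (g i)) (φ : V ≃ₗ[k] W)
    (hφ : ∀ σ, ∀ f ∈ ENDdeg 𝒱 σ, φ.conjAlgEquiv k f ∈ ENDdeg 𝒲 σ) :
    ∃ σ, ∀ i, φ (b i) ∈ 𝒲 (g i * σ) := by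
  obtain ⟨j⟩ := ‹Nonempty ι›
  have hE : ∀ i, φ.conjAlgEquiv k ((b.coord j).smulRight (b i)) (φ (b j)) = φ (b i) := by
    simp
  obtain ⟨y, hy⟩ : ∃ y, φ (b j) ∈ 𝒲 y := by
    refine exists_mem_of_range_le_span_singleton h𝒲
      (q := φ.conjAlgEquiv k ((b.coord j).smulRight (b j))) ?_ ?_ ?_
    · have hjj := h𝒱.smulRight_coord_mem_ENDdeg hb j j
      rw [mul_inv_cancel] at hjj
      exact hφ 1 _ hjj
    · intro h0
      have h0j : φ (b j) = 0 := by simpa [h0] using (hE j).symm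
      exact b.ne_zero j (φ.map_eq_zero_iff.mp h0j)
    · rintro _ ⟨w, rfl⟩
      simp [Submodule.mem_span_singleton]
  refine ⟨(g j)⁻¹ * y, fun i => ?_⟩
  rw [← hE i, ← mul_assoc]
  exact hφ _ _ (h𝒱.smulRight_coord_mem_ENDdeg hb i j) y _ hy

theorem iSupIndep.map_eq_of_basis_mem (h𝒱 : iSupIndep 𝒱) (h𝒲 : iSupIndep 𝒲)
    {b : Basis ι k V} (hb : ∀ i, b i ∈ 𝒱 (g i)) {φ : V ≃ₗ[k] W} {σ : G}
    (hφ : ∀ i, φ (b i) ∈ 𝒲 (g i * σ)) (x : G) :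
    (𝒱 x).map (φ : V →ₗ[k] W) = 𝒲 (x * σ) := by
  rw [← h𝒱.span_basis_fiber_eq b hb, ← h𝒲.span_basis_fiber_eq (b.map φ) hφ, Submodule.map_span]
  congr 1
  ext w
  simp

theorem conjAlgEquiv_mem_ENDdeg_iff {φ : V ≃ₗ[k] W} {σ : G}
    (hφ : ∀ x, (𝒱 x).map (φ : V →ₗ[k] W) = 𝒲 (x * σ)) (τ : G) (f : Module.End k V) :
    φ.conjAlgEquiv k f ∈ ENDdeg 𝒲 τ ↔ f ∈ ENDdeg 𝒱 τ := by
  have hmem : ∀ x v, φ v ∈ 𝒲 (x * σ) ↔ v ∈ 𝒱 x := fun x v => by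
    rw [← hφ, Submodule.mem_map_equiv, LinearEquiv.symm_apply_apply]
  change (∀ y, ∀ w ∈ 𝒲 y, φ (f (φ.symm w)) ∈ 𝒲 (τ * y)) ↔
    ∀ x, ∀ v ∈ 𝒱 x, f v ∈ 𝒱 (τ * x)
  constructor
  · intro hf x v hv
    rw [← hmem, mul_assoc]
    simpa using hf _ _ ((hmem x v).mpr hv)
  · intro hf y w hw
    rw [← inv_mul_cancel_right y σ, ← φ.apply_symm_apply w, hmem] at hw
    simpa [mul_assoc] using (hmem _ _).mpr (hf _ _ hw)

theorem map_conjAlgEquiv_ENDdeg {φ : V ≃ₗ[k] W} {σ : G}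
    (hφ : ∀ x, (𝒱 x).map (φ : V →ₗ[k] W) = 𝒲 (x * σ)) (τ : G) :
    (ENDdeg 𝒱 τ).map (φ.conjAlgEquiv k).toLinearMap = ENDdeg 𝒲 τ := by
  ext f'
  obtain ⟨f, rfl⟩ := (φ.conjAlgEquiv k).surjective f'
  simp only [Submodule.mem_map, AlgEquiv.toLinearMap_apply, EmbeddingLike.apply_eq_iff_eq,
    exists_eq_right, conjAlgEquiv_mem_ENDdeg_iff hφ]

end

/-- If `V`, `W` are `G`-graded vector spaces of dimension `m` with
homogeneous bases of degrees `(g_1,…,g_m)` and `(h_1,…,h_m)`, then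
`END(V) ≅ END(W)` as `G`-graded algebras iff there exist `σ ∈ G` and a
permutation `π` of `{1,…,m}` such that `h_i = g_{π(i)} σ` for all `i`. -/
theorem END_iso_iff_tuples {k : Type*} [Field k] {G : Type*} [Group G] [DecidableEq G]
    {V W : Type*} [AddCommGroup V] [Module k V] [AddCommGroup W] [Module k W] {m : ℕ}
    (𝒱 : G → Submodule k V) (hV : DirectSum.IsInternal 𝒱)
    (𝒲 : G → Submodule k W) (hW : DirectSum.IsInternal 𝒲)
    (b : Module.Basis (Fin m) k V) (g : Fin m → G) (hb : ∀ i, b i ∈ 𝒱 (g i))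
    (c : Module.Basis (Fin m) k W) (h : Fin m → G) (hc : ∀ i, c i ∈ 𝒲 (h i)) :
    (∃ e : Module.End k V ≃ₐ[k] Module.End k W,
        ∀ σ : G, Submodule.map e.toLinearMap (ENDdeg 𝒱 σ) = ENDdeg 𝒲 σ)
      ↔ ∃ (σ : G) (π : Equiv.Perm (Fin m)), ∀ i, h i = g (π i) * σ := by
  constructor
  · rintro ⟨e, he⟩
    obtain ⟨φ, rfl⟩ := e.eq_linearEquivConjAlgEquiv
    rcases isEmpty_or_nonempty (Fin m) with hm | hm
    · exact ⟨1, 1, isEmptyElim⟩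
    obtain ⟨σ, hσ⟩ := exists_shift_of_conjAlgEquiv_mem_ENDdeg hV.submodule_iSupIndep
      hW.submodule_iSup_eq_top hb φ fun σ f hf => he σ ▸ Submodule.mem_map_of_mem hf
    obtain ⟨π, hπ⟩ :=
      hW.submodule_iSupIndep.exists_perm_of_homogeneous_bases (b := b.map φ) hσ hc
    exact ⟨σ, π, hπ⟩
  · rintro ⟨σ, π, hπ⟩
    have hφ : ∀ j, b.equiv c π.symm (b j) ∈ 𝒲 (g j * σ) := fun j => by
      simpa [hπ] using hc (π.symm j)
    exact ⟨_, map_conjAlgEquiv_ENDdeg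
      (hV.submodule_iSupIndep.map_eq_of_basis_mem hW.submodule_iSupIndep hb hφ)⟩
end

section
/- The isomorphism classes of good G-gradings on M_m(k) are in bijection with the orbits of the action of S_m × G on G^m, where S_m acts by permuting coordinates and G acts diagonally by right translation. -/
/-- A good `G`-grading on the matrix algebra `M_m(k)`: a direct sum
decomposition into subspaces `𝒜 g` with `𝒜 g * 𝒜 h ⊆ 𝒜 (g*h)` for which all
matrix units `e_{ij}` are homogeneous. -/
def IsGoodGrading {k : Type*} [Field k] {G : Type*} [Group G] [DecidableEq G] (m : ℕ)
    (𝒜 : G → Submodule k (Matrix (Fin m) (Fin m) k)) : Prop :=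
  DirectSum.IsInternal 𝒜 ∧ (∀ g h : G, 𝒜 g * 𝒜 h ≤ 𝒜 (g * h)) ∧
    ∀ i j : Fin m, ∃ σ : G, Matrix.single i j 1 ∈ 𝒜 σ

/-!
A tuple `t` grades `M_n(R) = End(R^n)` by giving `e_{ij}` the degree `t i * (t j)⁻¹`. In a good
grading the degrees `d i j` of the matrix units satisfy `d i j * d j l = d i l`, so they have this
form (with `t i = d i i₀`), and since the `e_{ij}` span, the grading is the one of `t`. Permuting `t`
or translating it on the right gives an isomorphic grading (reindex the matrices). Conversely, let
`e` be a graded isomorphism from the grading of `t` to that of `t'`. The matrix `W` whose `i`-th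
column is a fixed nonzero column `b` of `e(e_{i i₀})` is invertible: `e_{i₀ j} e_{i i₀} = δ_{ij} e_{i₀ i₀}`
makes its product with the matching row matrix a nonzero scalar. So some term of `det W` is nonzero,
i.e. a permutation `π` has `W (π i) i ≠ 0` for all `i`, and homogeneity of `e(e_{i i₀})` then gives
`t' (π i) * (t' b)⁻¹ = t i * (t i₀)⁻¹`.
-/

theorem exists_eq_mul_inv_of_mul_eq {ι G : Type*} [Group G] (d : ι → ι → G)
    (hd : ∀ i j l, d i j * d j l = d i l) : ∃ t : ι → G, ∀ i j, d i j = t i * (t j)⁻¹ := by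
  cases isEmpty_or_nonempty ι with
  | inl _ => exact ⟨isEmptyElim, fun i => isEmptyElim i⟩
  | inr h =>
    obtain ⟨i₀⟩ := h
    exact ⟨fun i => d i i₀, fun i j => eq_mul_inv_of_mul_eq (hd i j i₀)⟩

theorem iSupIndep.eq_of_mem_of_mem {R M ι : Type*} [Semiring R] [AddCommMonoid M] [Module R M]
    {p : ι → Submodule R M} (hp : iSupIndep p) {x : M} (hx : x ≠ 0) {i j : ι}
    (hi : x ∈ p i) (hj : x ∈ p j) : i = j :=
  by_contra fun hij => hx (Submodule.disjoint_def.1 (hp.pairwiseDisjoint hij) x hi hj)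

def GradedIsomorphic {R A ι : Type*} [CommSemiring R] [Semiring A] [Algebra R A]
    (𝒜 ℬ : ι → Submodule R A) : Prop :=
  ∃ e : A ≃ₐ[R] A, ∀ i, (𝒜 i).map e.toLinearMap = ℬ i

theorem GradedIsomorphic.equivalence {R A ι : Type*} [CommSemiring R] [Semiring A] [Algebra R A] :
    Equivalence (GradedIsomorphic (R := R) (A := A) (ι := ι)) where
  refl 𝒜 := ⟨AlgEquiv.refl, fun i => Submodule.map_id (𝒜 i)⟩
  symm := fun ⟨e, he⟩ => ⟨e.symm, fun i => by rw [← he i, ← Submodule.map_comp]; simp⟩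
  trans := fun ⟨e, he⟩ ⟨f, hf⟩ =>
    ⟨e.trans f, fun i => by rw [AlgEquiv.trans_toLinearMap, Submodule.map_comp, he, hf]⟩

namespace Matrix

theorem single_ne_zero {m n α : Type*} [DecidableEq m] [DecidableEq n] [Zero α] {c : α}
    (hc : c ≠ 0) (i : m) (j : n) : single i j c ≠ 0 :=
  fun h => hc (by simpa using congrFun (congrFun h i) j)

section

variable {n R : Type*} [Fintype n] [DecidableEq n] [CommRing R]

theorem exists_perm_forall_ne_zero_of_det_ne_zero {M : Matrix n n R} (h : M.det ≠ 0) :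
    ∃ π : Equiv.Perm n, ∀ i, M (π i) i ≠ 0 := by
  rw [det_apply] at h
  obtain ⟨π, -, hπ⟩ := Finset.exists_ne_zero_of_sum_ne_zero h
  refine ⟨π, fun i hi => hπ ?_⟩
  have hprod : ∏ j, M (π j) j = 0 := Finset.prod_eq_zero (Finset.mem_univ i) hi
  rw [hprod, smul_zero]

theorem algHom_single_row_mul_col {n' : Type*} [Fintype n'] [DecidableEq n']
    (f : Matrix n n R →ₐ[R] Matrix n' n' R) (i₀ : n) (a b : n') :
    (of fun j y => f (single i₀ j 1) a y) * (of fun x i => f (single i i₀ 1) x b) =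
      f (single i₀ i₀ 1) a b • (1 : Matrix n n R) := by
  ext j i
  rw [mul_apply]
  simp only [of_apply]
  rw [← mul_apply, ← map_mul]
  by_cases h : j = i
  · subst h; simp
  · simp [single_mul_single_of_ne, h]

theorem det_algHom_single_col_ne_zero [IsDomain R] (f : Matrix n n R →ₐ[R] Matrix n n R)
    {i₀ a b : n} (h : f (single i₀ i₀ 1) a b ≠ 0) :
    (of fun x i => f (single i i₀ 1) x b).det ≠ 0 := by
  intro h0
  have := congrArg det (algHom_single_row_mul_col f i₀ a b)
  rw [det_mul, h0, mul_zero, det_smul, det_one, mul_one] at this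
  exact pow_ne_zero _ h this.symm

end

variable {n R G : Type*} [CommRing R] [Group G]

variable (R) in
/-- The grading of `End(R^n)` induced by giving the `i`-th basis vector of `R^n` degree `t i`. -/
def endGrading (t : n → G) (σ : G) : Submodule R (Matrix n n R) where
  carrier := {x | ∀ i j, t i * (t j)⁻¹ ≠ σ → x i j = 0}
  add_mem' hx hy i j h := by simp [hx i j h, hy i j h]
  zero_mem' _ _ _ := rfl
  smul_mem' c x hx i j h := by simp [hx i j h]

theorem mem_endGrading {t : n → G} {σ : G} {x : Matrix n n R} :
    x ∈ endGrading R t σ ↔ ∀ i j, t i * (t j)⁻¹ ≠ σ → x i j = 0 :=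
  Iff.rfl

theorem degree_eq_of_mem_endGrading {t : n → G} {σ : G} {x : Matrix n n R}
    (hx : x ∈ endGrading R t σ) {i j : n} (hij : x i j ≠ 0) : t i * (t j)⁻¹ = σ :=
  by_contra fun h => hij (hx i j h)

theorem endGrading_mul_right (t : n → G) (σ : G) :
    endGrading R (fun i => t i * σ) = endGrading R t := by
  have hdeg (i j : n) : t i * σ * (t j * σ)⁻¹ = t i * (t j)⁻¹ := by group
  ext τ x
  simp only [mem_endGrading, hdeg]

theorem iSupIndep_endGrading (t : n → G) : iSupIndep (endGrading R t) := by
  refine (iSupIndep_iff_finsetSum_eq_zero_imp_eq_zero _).2 fun s x hx hsum σ hσ => ?_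
  ext i j
  by_cases hij : t i * (t j)⁻¹ = σ
  · have hentry := congrFun (congrFun hsum i) j
    rwa [sum_apply, Finset.sum_eq_single σ
      (fun τ hτ hτσ => hx τ hτ i j fun h => hτσ (h.symm.trans hij)) (absurd hσ)] at hentry
  · exact hx σ hσ i j hij

variable [DecidableEq n]

theorem single_mem_endGrading (t : n → G) (i j : n) (c : R) :
    single i j c ∈ endGrading R t (t i * (t j)⁻¹) := by
  intro a b h
  apply single_apply_of_ne
  rintro ⟨rfl, rfl⟩
  exact h rfl

variable [Fintype n]

theorem endGrading_mul_le (t : n → G) (g h : G) :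
    endGrading R t g * endGrading R t h ≤ endGrading R t (g * h) := by
  refine Submodule.mul_le.2 fun x hx y hy i j hij => ?_
  rw [mul_apply]
  refine Finset.sum_eq_zero fun l _ => ?_
  by_cases hil : t i * (t l)⁻¹ = g
  · have hlj : t l * (t j)⁻¹ ≠ h := fun hlj => hij (by rw [← hil, ← hlj]; group)
    rw [hy l j hlj, mul_zero]
  · rw [hx i l hil, zero_mul]

theorem iSup_endGrading_eq_top (t : n → G) : ⨆ σ, endGrading R t σ = ⊤ := by
  refine eq_top_iff.2 fun x _ => ?_
  rw [matrix_eq_sum_single x]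
  exact Submodule.sum_mem _ fun i _ => Submodule.sum_mem _ fun j _ =>
    Submodule.mem_iSup_of_mem _ (single_mem_endGrading t i j _)

theorem endGrading_le_of_single_mem {𝒜 : G → Submodule R (Matrix n n R)} {t : n → G}
    (h : ∀ i j, single i j 1 ∈ 𝒜 (t i * (t j)⁻¹)) (σ : G) : endGrading R t σ ≤ 𝒜 σ := by
  intro x hx
  rw [matrix_eq_sum_single x]
  refine Submodule.sum_mem _ fun i _ => Submodule.sum_mem _ fun j _ => ?_
  by_cases hij : t i * (t j)⁻¹ = σ
  · simpa [hij] using Submodule.smul_mem _ (x i j) (h i j)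
  · simp [hx i j hij]

theorem exists_eq_endGrading [Nontrivial R] {𝒜 : G → Submodule R (Matrix n n R)}
    (hind : iSupIndep 𝒜) (hmul : ∀ g h, 𝒜 g * 𝒜 h ≤ 𝒜 (g * h))
    (hsingle : ∀ i j, ∃ σ, single i j (1 : R) ∈ 𝒜 σ) :
    ∃ t : n → G, 𝒜 = endGrading R t := by
  choose d hd using hsingle
  have hcocycle (i j l : n) : d i j * d j l = d i l := by
    refine hind.eq_of_mem_of_mem (single_ne_zero one_ne_zero i l) ?_ (hd i l)
    simpa using hmul _ _ (Submodule.mul_mem_mul (hd i j) (hd j l))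
  obtain ⟨t, ht⟩ := exists_eq_mul_inv_of_mul_eq d hcocycle
  refine ⟨t, ((hind.le_iff_eq_of_iSup_eq_top (iSup_endGrading_eq_top t)).1 fun σ => ?_).symm⟩
  exact endGrading_le_of_single_mem (fun i j => ht i j ▸ hd i j) σ

theorem map_reindexAlgEquiv_endGrading {n' : Type*} [Fintype n'] [DecidableEq n'] (e : n ≃ n')
    (t : n → G) (σ : G) :
    (endGrading R t σ).map (reindexAlgEquiv R R e).toLinearMap = endGrading R (t ∘ e.symm) σ := by
  ext x
  constructor
  · rintro ⟨y, hy, rfl⟩ i j h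
    exact hy (e.symm i) (e.symm j) h
  · intro hx
    refine ⟨reindex e.symm e.symm x, fun i j h => hx (e i) (e j) (by simpa using h), ?_⟩
    ext i j
    simp

theorem exists_perm_of_map_endGrading_le [IsDomain R] {t t' : n → G}
    (e : Matrix n n R ≃ₐ[R] Matrix n n R)
    (he : ∀ σ, (endGrading R t σ).map e.toLinearMap ≤ endGrading R t' σ) :
    ∃ (π : Equiv.Perm n) (σ : G), ∀ i, t' i = t (π i) * σ := by
  cases isEmpty_or_nonempty n with
  | inl _ => exact ⟨1, 1, isEmptyElim⟩
  | inr h =>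
    obtain ⟨i₀⟩ := h
    have hdeg (i j : n) : e (single i j 1) ∈ endGrading R t' (t i * (t j)⁻¹) :=
      he _ (Submodule.mem_map_of_mem (single_mem_endGrading t i j 1))
    obtain ⟨a, b, hab⟩ : ∃ a b, e (single i₀ i₀ 1) a b ≠ 0 := by
      by_contra! h
      exact single_ne_zero one_ne_zero i₀ i₀ (e.injective (by ext a b; simp [h]))
    obtain ⟨π, hπ⟩ :=
      exists_perm_forall_ne_zero_of_det_ne_zero (det_algHom_single_col_ne_zero e.toAlgHom hab)
    refine ⟨π.symm, (t i₀)⁻¹ * t' b, fun i => ?_⟩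
    have hdeg_i := degree_eq_of_mem_endGrading (hdeg (π.symm i) i₀) (hπ (π.symm i))
    rw [Equiv.apply_symm_apply] at hdeg_i
    rw [← mul_assoc, ← hdeg_i, inv_mul_cancel_right]

theorem gradedIsomorphic_endGrading_iff [IsDomain R] (t t' : n → G) :
    GradedIsomorphic (endGrading R t) (endGrading R t') ↔
      ∃ (π : Equiv.Perm n) (σ : G), ∀ i, t' i = t (π i) * σ := by
  refine ⟨fun ⟨e, he⟩ => exists_perm_of_map_endGrading_le e fun σ => (he σ).le, ?_⟩
  rintro ⟨π, σ, hπ⟩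
  obtain rfl : t' = fun i => t (π i) * σ := funext hπ
  refine ⟨reindexAlgEquiv R R π.symm, fun τ => ?_⟩
  rw [map_reindexAlgEquiv_endGrading, endGrading_mul_right]
  rfl

end Matrix

open Matrix

theorem isGoodGrading_endGrading {k : Type*} [Field k] {G : Type*} [Group G] [DecidableEq G]
    {m : ℕ} (t : Fin m → G) : IsGoodGrading m (endGrading k t) :=
  ⟨DirectSum.isInternal_submodule_of_iSupIndep_of_iSup_eq_top (iSupIndep_endGrading t)
    (iSup_endGrading_eq_top t), endGrading_mul_le t, fun i j => ⟨_, single_mem_endGrading t i j 1⟩⟩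

theorem IsGoodGrading.exists_eq_endGrading {k : Type*} [Field k] {G : Type*} [Group G]
    [DecidableEq G] {m : ℕ} {𝒜 : G → Submodule k (Matrix (Fin m) (Fin m) k)}
    (h𝒜 : IsGoodGrading m 𝒜) : ∃ t : Fin m → G, 𝒜 = endGrading k t :=
  Matrix.exists_eq_endGrading h𝒜.1.submodule_iSupIndep h𝒜.2.1 h𝒜.2.2

/-- The isomorphism classes of good `G`-gradings on `M_m(k)` are in
bijection with the orbits of the `S_m × G` action on `G^m`, where `S_m` permutes
coordinates and `G` acts diagonally by right translation. -/
theorem good_gradings_biject_orbits {k : Type*} [Field k] {G : Type*} [Group G]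
    [DecidableEq G] (m : ℕ) :
    Nonempty
      ((Quot (fun (A B : {𝒜 : G → Submodule k (Matrix (Fin m) (Fin m) k) //
            IsGoodGrading m 𝒜}) =>
          ∃ e : Matrix (Fin m) (Fin m) k ≃ₐ[k] Matrix (Fin m) (Fin m) k,
            ∀ σ : G, Submodule.map e.toLinearMap (A.1 σ) = B.1 σ))
        ≃
       (Quot (fun (t t' : Fin m → G) =>
          ∃ (π : Equiv.Perm (Fin m)) (σ : G), ∀ i, t' i = t (π i) * σ))) := by
  have hiso := (GradedIsomorphic.equivalence (R := k)).comap
    (Subtype.val : {𝒜 : G → _ // IsGoodGrading m 𝒜} → _)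
  let F (t : Fin m → G) : Quot (Function.onFun GradedIsomorphic Subtype.val) :=
    Quot.mk _ ⟨endGrading k t, isGoodGrading_endGrading t⟩
  have hF : Function.Surjective F := Quot.ind fun A =>
    A.2.exists_eq_endGrading.imp fun t ht => congrArg _ (Subtype.ext ht.symm)
  have hker (t t' : Fin m → G) : (∃ (π : Equiv.Perm (Fin m)) (σ : G), ∀ i, t' i = t (π i) * σ) ↔
      F t = F t' := by
    rw [← gradedIsomorphic_endGrading_iff (R := k)]
    exact ⟨fun h => Quot.sound h, fun h => hiso.eqvGen_iff.1 (Quot.eqvGen_exact h)⟩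
  exact ⟨((Quot.congrRight hker).trans (Setoid.quotientKerEquivOfSurjective F hF)).symm⟩
end

section
/- Let τ be the cyclic permutation (0 1 … n-1) acting on F_{n,m} by permuting coordinates, and let d be a positive divisor of n. An element α = (k_0,…,k_{n-1}) ∈ F_{n,m} satisfies τ^d α = α if and only if k_{i+d} = k_i for all 0 ≤ i ≤ n-1-d; in that case n/d divides m, and the set A_d of such elements has cardinality C(md/n + d - 1, d - 1) whenever n/d divides m. -/
open Finset

section Aux

variable {n d : ℕ} [NeZero n]

private lemma shift_mul (α : ZMod n → ℕ)
    (h : ∀ i : ZMod n, α (i + (d : ZMod n)) = α i) (k : ℕ) :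
    ∀ i : ZMod n, α (i + ((d * k : ℕ) : ZMod n)) = α i := by
  induction k with
  | zero => simp
  | succ k ih =>
    intro i
    have hc : ((d * (k + 1) : ℕ) : ZMod n) = (d : ZMod n) + ((d * k : ℕ) : ZMod n) := by
      push_cast; ring
    rw [hc, ← add_assoc, ih (i + (d : ZMod n)), h i]

private lemma mod_key (α : ZMod n → ℕ)
    (h : ∀ i : ZMod n, α (i + (d : ZMod n)) = α i) (j : ℕ) :
    α (j : ZMod n) = α ((j % d : ℕ) : ZMod n) := by
  conv_lhs => rw [← Nat.mod_add_div j d]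
  rw [Nat.cast_add]
  exact shift_mul α h (j / d) ((j % d : ℕ) : ZMod n)

private lemma sum_zmod (f : ZMod n → ℕ) :
    ∑ i : ZMod n, f i = ∑ j ∈ range n, f ((j : ℕ) : ZMod n) := by
  have hb : Function.Bijective (fun j : Fin n => ((j : ℕ) : ZMod n)) := by
    rw [Fintype.bijective_iff_injective_and_card]
    constructor
    · intro a b hab
      have := congrArg ZMod.val hab
      simp only [ZMod.val_natCast] at this
      have ha : (a : ℕ) % n = (a : ℕ) := Nat.mod_eq_of_lt a.2
      have hb' : (b : ℕ) % n = (b : ℕ) := Nat.mod_eq_of_lt b.2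
      exact Fin.ext (by rw [ha, hb'] at this; exact this)
    · simp [ZMod.card]
  rw [← Fin.sum_univ_eq_sum_range (fun j => f ((j : ℕ) : ZMod n)) n]
  exact (Fintype.sum_bijective _ hb (fun j : Fin n => f ((j : ℕ) : ZMod n)) f
    (fun _ => rfl)).symm

private lemma sum_range_mod (f : ℕ → ℕ) (d e : ℕ) :
    ∑ j ∈ range (d * e), f (j % d) = e * ∑ r ∈ range d, f (r % d) := by
  induction e with
  | zero => simp
  | succ e ih =>
    rw [Nat.mul_succ, Finset.sum_range_add, ih, Nat.succ_mul]
    congr 1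
    refine Finset.sum_congr rfl fun x _ => ?_
    rw [add_comm (d * e) x, Nat.add_mul_mod_self_left]

/-- For a `d`-periodic function, the total sum is `(n/d)` times the sum of the
first `d` values. -/
private lemma sum_eq_aux (hd : 0 < d) (hdn : d ∣ n) (α : ZMod n → ℕ)
    (h : ∀ i : ZMod n, α (i + (d : ZMod n)) = α i) :
    ∑ i : ZMod n, α i = (n / d) * ∑ r ∈ range d, α ((r : ℕ) : ZMod n) := by
  obtain ⟨e, he⟩ := hdn
  have hnd : n / d = e := by rw [he]; exact Nat.mul_div_cancel_left e hd
  set g : ℕ → ℕ := fun x => α ((x : ℕ) : ZMod n) with hg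
  rw [sum_zmod, hnd]
  calc ∑ j ∈ range n, g j
      = ∑ j ∈ range (d * e), g (j % d) := by
        rw [← he]; exact Finset.sum_congr rfl fun j _ => mod_key α h j
    _ = e * ∑ r ∈ range d, g (r % d) := sum_range_mod g d e
    _ = e * ∑ r ∈ range d, g r := by
        congr 1
        exact Finset.sum_congr rfl fun r hr => by
          rw [Nat.mod_eq_of_lt (Finset.mem_range.mp hr)]

private lemma val_add_d_mod (hdn : d ∣ n) (i : ZMod n) :
    (i + (d : ZMod n)).val % d = i.val % d := by
  rw [ZMod.val_add, Nat.mod_mod_of_dvd _ hdn, ZMod.val_natCast, Nat.add_mod,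
    Nat.mod_mod_of_dvd _ hdn, Nat.mod_self, Nat.add_zero, Nat.mod_mod_of_dvd _ (dvd_refl d)]

private lemma key_restricted (hd : 0 < d) (α : ZMod n → ℕ)
    (h : ∀ i : ℕ, i + d ≤ n - 1 → α ((i + d : ℕ) : ZMod n) = α ((i : ℕ) : ZMod n)) :
    ∀ j : ℕ, j < n → α (j : ZMod n) = α ((j % d : ℕ) : ZMod n) := by
  intro j
  induction j using Nat.strong_induction_on with
  | _ j ih =>
    intro hj
    rcases lt_or_ge j d with hjd | hjd
    · rw [Nat.mod_eq_of_lt hjd]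
    · have h1 : (j - d) + d = j := by omega
      have h2 : (j - d) + d ≤ n - 1 := by omega
      have h3 := h (j - d) h2
      rw [h1] at h3
      rw [h3, ih (j - d) (by omega) (by omega)]
      congr 2
      conv_rhs => rw [← h1]
      rw [Nat.add_mod_right]

private lemma card_finsum {ι γ : Type*} (s : Finset ι) (f : ι → Multiset γ) :
    Multiset.card (∑ i ∈ s, f i) = ∑ i ∈ s, Multiset.card (f i) := by
  induction s using Finset.cons_induction with
  | empty => simp
  | cons a s ha ih => simp [Finset.sum_cons, ih]

/-- The stars-and-bars equivalence. -/
private def symEquiv (d t : ℕ) :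
    {β : Fin d → ℕ // ∑ r, β r = t} ≃ Sym (Fin d) t where
  toFun β := ⟨∑ r : Fin d, Multiset.replicate (β.1 r) r, by
    rw [card_finsum]
    simp only [Multiset.card_replicate]
    exact β.2⟩
  invFun s := ⟨fun r => s.1.count r, by
    rw [Multiset.sum_count_eq_card (fun a _ => Finset.mem_univ a), s.2]⟩
  left_inv β := by
    ext r
    simp [Multiset.count_sum', Multiset.count_replicate]
  right_inv s := by
    apply Subtype.ext
    show ∑ r : Fin d, Multiset.replicate (s.1.count r) r = s.1
    have hsub : ∑ r : Fin d, Multiset.replicate (s.1.count r) r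
        = ∑ r ∈ s.1.toFinset, Multiset.replicate (s.1.count r) r := by
      refine (Finset.sum_subset (Finset.subset_univ _) fun x _ hx => ?_).symm
      rw [Multiset.count_eq_zero_of_notMem (by simpa using hx)]
      rfl
    rw [hsub]
    calc ∑ r ∈ s.1.toFinset, Multiset.replicate (s.1.count r) r
        = ∑ r ∈ s.1.toFinset, s.1.count r • ({r} : Multiset (Fin d)) := by
          refine Finset.sum_congr rfl fun r _ => ?_
          rw [Multiset.nsmul_singleton]
      _ = s.1 := Multiset.toFinset_sum_count_nsmul_eq s.1

end Aux

/-- For the cyclic shift `τ` acting on `F_{n,m}` (tuples indexed by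
`ZMod n` summing to `m`) and a positive divisor `d` of `n`:
`τ^d α = α` iff `k_{i+d} = k_i` for `0 ≤ i ≤ n-1-d`; in that case `n/d ∣ m`;
and if `n/d ∣ m` then `|A_d| = C(md/n + d - 1, d - 1)`. -/
theorem fixed_points_of_shift (n m d : ℕ) [NeZero n] (hm : 0 < m)
    (hd : 0 < d) (hdn : d ∣ n) :
    (∀ α : ZMod n → ℕ, ∑ i, α i = m →
      ((∀ i : ZMod n, α (i + (d : ZMod n)) = α i) ↔
        ∀ i : ℕ, i + d ≤ n - 1 → α ((i + d : ℕ) : ZMod n) = α ((i : ℕ) : ZMod n))) ∧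
    (∀ α : ZMod n → ℕ, ∑ i, α i = m →
      (∀ i : ZMod n, α (i + (d : ZMod n)) = α i) → n / d ∣ m) ∧
    (n / d ∣ m →
      Nat.card {α : ZMod n → ℕ //
          (∑ i, α i = m) ∧ ∀ i : ZMod n, α (i + (d : ZMod n)) = α i}
        = Nat.choose (m * d / n + d - 1) (d - 1)) := by
  have hn : 0 < n := Nat.pos_of_ne_zero (NeZero.ne n)
  have hdn' := hdn
  obtain ⟨e, he⟩ := hdn
  have he' : 0 < e := by
    rcases Nat.eq_zero_or_pos e with h0 | h
    · subst h0; simp at he; omega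
    · exact h
  have hnd : n / d = e := by rw [he]; exact Nat.mul_div_cancel_left e hd
  have hdlen : d ≤ n := Nat.le_of_dvd hn hdn'
  refine ⟨?_, ?_, ?_⟩
  · intro α _
    constructor
    · intro h i _
      have hc : ((i + d : ℕ) : ZMod n) = (i : ZMod n) + (d : ZMod n) := by push_cast; ring
      rw [hc]; exact h ((i : ℕ) : ZMod n)
    · intro h i
      have key := key_restricted hd α h
      have h1 : (((i + (d : ZMod n)).val : ℕ) : ZMod n) = i + (d : ZMod n) :=
        ZMod.natCast_rightInverse _
      have h2 : ((i.val : ℕ) : ZMod n) = i := ZMod.natCast_rightInverse _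
      calc α (i + (d : ZMod n)) = α (((i + (d : ZMod n)).val : ℕ) : ZMod n) := by rw [h1]
        _ = α ((((i + (d : ZMod n)).val % d : ℕ)) : ZMod n) := key _ (ZMod.val_lt _)
        _ = α (((i.val % d : ℕ)) : ZMod n) := by rw [val_add_d_mod hdn' i]
        _ = α ((i.val : ℕ) : ZMod n) := (key i.val (ZMod.val_lt _)).symm
        _ = α i := by rw [h2]
  · intro α hsum h
    rw [← hsum, sum_eq_aux hd hdn' α h]
    exact Dvd.intro _ rfl
  · intro hm'
    have hem : e ∣ m := hnd ▸ hm'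
    set t := m / e with ht
    have hmt : m = e * t := (Nat.mul_div_cancel' hem).symm
    have hmdn : m * d / n = t := by
      rw [he, mul_comm m d, Nat.mul_div_mul_left _ _ hd]
    -- the forward map's sum property
    have key2 : ∀ α : ZMod n → ℕ, (∑ i, α i = m) →
        (∀ i : ZMod n, α (i + (d : ZMod n)) = α i) →
        ∑ r : Fin d, α ((r : ℕ) : ZMod n) = t := by
      intro α hsum h
      have := sum_eq_aux hd hdn' α h
      rw [hsum, hnd] at this
      have hS : ∑ r : Fin d, α ((r : ℕ) : ZMod n)
          = ∑ r ∈ range d, α ((r : ℕ) : ZMod n) :=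
        Fin.sum_univ_eq_sum_range (fun r => α ((r : ℕ) : ZMod n)) d
      rw [hS]
      have h2 : e * t = e * ∑ r ∈ range d, α ((r : ℕ) : ZMod n) := by
        rw [← hmt]; exact this
      exact (Nat.eq_of_mul_eq_mul_left he' h2).symm
    -- the backward map's properties
    have key3 : ∀ β : Fin d → ℕ, (∑ r, β r = t) →
        (∑ i : ZMod n, β ⟨i.val % d, Nat.mod_lt _ hd⟩ = m) ∧
        (∀ i : ZMod n, β ⟨(i + (d : ZMod n)).val % d, Nat.mod_lt _ hd⟩
          = β ⟨i.val % d, Nat.mod_lt _ hd⟩) := by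
      intro β hβ
      set f : ℕ → ℕ := fun j => β ⟨j % d, Nat.mod_lt _ hd⟩ with hf
      have hff : ∀ j : ℕ, f j = f (j % d) := by
        intro j
        exact congrArg β (Fin.ext (Nat.mod_mod_of_dvd j (dvd_refl d)).symm)
      constructor
      · calc ∑ i : ZMod n, β ⟨i.val % d, Nat.mod_lt _ hd⟩
            = ∑ j ∈ range n, f (((j : ℕ) : ZMod n)).val :=
              sum_zmod (fun i => f i.val)
          _ = ∑ j ∈ range n, f (j % d) := by
              refine Finset.sum_congr rfl fun j hj => ?_
              rw [ZMod.val_natCast, Nat.mod_eq_of_lt (Finset.mem_range.mp hj), hff]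
          _ = e * ∑ r ∈ range d, f (r % d) := by rw [he]; exact sum_range_mod f d e
          _ = e * ∑ r ∈ range d, f r := by
              congr 1
              exact Finset.sum_congr rfl fun r hr => (hff r).symm
          _ = e * ∑ r : Fin d, β r := by
              congr 1
              rw [← Fin.sum_univ_eq_sum_range f d]
              refine Fintype.sum_congr _ _ fun r => ?_
              exact congrArg β (Fin.ext (Nat.mod_eq_of_lt r.2))
          _ = m := by rw [hβ, ← hmt]
      · intro i
        exact congrArg β (Fin.ext (val_add_d_mod hdn' i))
    let E : {α : ZMod n → ℕ //
          (∑ i, α i = m) ∧ ∀ i : ZMod n, α (i + (d : ZMod n)) = α i}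
        ≃ {β : Fin d → ℕ // ∑ r, β r = t} :=
      { toFun := fun a => ⟨fun r => a.1 ((r : ℕ) : ZMod n), key2 a.1 a.2.1 a.2.2⟩
        invFun := fun b => ⟨fun i => b.1 ⟨i.val % d, Nat.mod_lt _ hd⟩,
          (key3 b.1 b.2).1, (key3 b.1 b.2).2⟩
        left_inv := by
          intro a
          apply Subtype.ext
          funext i
          show a.1 (((i.val % d : ℕ) : ZMod n)) = a.1 i
          have h2 : ((i.val : ℕ) : ZMod n) = i := ZMod.natCast_rightInverse _
          conv_rhs => rw [← h2]
          exact (mod_key a.1 a.2.2 i.val).symm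
        right_inv := by
          intro b
          apply Subtype.ext
          funext r
          show b.1 ⟨(((r : ℕ) : ZMod n)).val % d, _⟩ = b.1 r
          refine congrArg b.1 (Fin.ext ?_)
          show (((r : ℕ) : ZMod n)).val % d = (r : ℕ)
          rw [ZMod.val_natCast, Nat.mod_eq_of_lt (lt_of_lt_of_le r.2 hdlen),
            Nat.mod_eq_of_lt r.2] }
    rw [Nat.card_congr (E.trans (symEquiv d t)), Nat.card_eq_fintype_card,
      Sym.card_sym_eq_choose, hmdn, Fintype.card_fin]
    have h1 : d + t - 1 = t + d - 1 := by omega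
    have h2 : d - 1 = (t + d - 1) - t := by omega
    rw [h1, h2, Nat.choose_symm (by omega)]
end

section
/- Let k be a field, H a finite group, and l a Galois extension of k with group H. Define the crossed product Δ(l,H) = ⊕_{σ∈H} l u_σ with multiplication (a u_σ)(b u_τ) = a σ(b) u_{στ}. Then the map j : Δ(l,H) → End_k(l) defined by j(a u_σ)(b) = a σ(b) is an isomorphism of k-algebras. -/
/-!
By Dedekind's independence of characters, the automorphisms `σ ∈ H`, viewed as `k`-linear
endomorphisms of `l`, are linearly independent over `l` in `End_k(l)`. Since
`|H| = [l : k] = dim_l End_k(l)`, they form an `l`-basis, which is the bijectivity of `j`.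
-/

open Function Module

section

variable {k l : Type*} [Field k] [Field l] [Algebra k l]

theorem linearIndependent_algEquiv_toLinearMap {H : Type*} {φ : H → l ≃ₐ[k] l}
    (hφ : Injective φ) : LinearIndependent l (fun σ => (φ σ).toLinearMap) :=
  (linearIndependent_toLinearMap k l l).comp (fun σ => (φ σ : l →ₐ[k] l))
    fun _ _ h => hφ (AlgEquiv.coe_toAlgHom_injective h)

theorem bijective_fintypeLinearCombination_algEquiv [FiniteDimensional k l] [IsGalois k l]
    {H : Type*} [Fintype H] (φ : H ≃ (l ≃ₐ[k] l)) :
    Bijective (Fintype.linearCombination l (fun σ => (φ σ).toLinearMap)) := by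
  have hinj := linearIndependent_iff_injective_fintypeLinearCombination.mp
    (linearIndependent_algEquiv_toLinearMap φ.injective)
  have hdim : finrank l (H → l) = finrank l (l →ₗ[k] l) := by
    rw [finrank_fintype_fun_eq_card, finrank_linearMap_self, Fintype.card_congr φ,
      ← Nat.card_eq_fintype_card, IsGalois.card_aut_eq_finrank]
  exact ⟨hinj, (LinearMap.injective_iff_surjective_of_finrank_eq_finrank hdim).mp hinj⟩

theorem smul_algEquiv_toLinearMap_comp (a b : l) (σ τ : l ≃ₐ[k] l) :
    (a • σ.toLinearMap) ∘ₗ (b • τ.toLinearMap) = (a * σ b) • (σ * τ).toLinearMap := by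
  ext x
  simp [mul_assoc]

end

/-- If `l` is a Galois extension of `k` with (Galois) group `H`,
then the map `j : Δ(l,H) = ⊕_{σ∈H} l·u_σ → End_k(l)`, `j(a u_σ)(b) = a σ(b)`,
is an isomorphism of `k`-algebras; i.e. the `k`-linear map
`f ↦ ∑_σ f(σ) • σ` is bijective, and composition in `End_k(l)` corresponds to
the crossed product multiplication `(a u_σ)(b u_τ) = a σ(b) u_{στ}`. -/
theorem crossed_product_iso_End (k l : Type*) [Field k] [Field l] [Algebra k l]
    [IsGalois k l] [FiniteDimensional k l]
    (H : Type*) [Group H] [Fintype H] (action : H ≃* (l ≃ₐ[k] l)) :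
    Function.Bijective
      (fun f : H → l => ∑ σ : H, f σ • ((action σ : l ≃ₐ[k] l).toLinearMap)) ∧
    ∀ (a b : l) (σ τ : H),
      (a • ((action σ : l ≃ₐ[k] l).toLinearMap)) ∘ₗ
          (b • ((action τ : l ≃ₐ[k] l).toLinearMap))
        = (a * (action σ : l ≃ₐ[k] l) b) • ((action (σ * τ) : l ≃ₐ[k] l).toLinearMap) := by
  refine ⟨bijective_fintypeLinearCombination_algEquiv action.toEquiv, fun a b σ τ => ?_⟩
  rw [map_mul]
  exact smul_algEquiv_toLinearMap_comp a b (action σ) (action τ)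
end
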